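/- A state U = (ρ, m, B, E) with ρ > 0 satisfies 𝓔(U) = E - (|m|²/ρ + |B|²)/2 > 0 if and only if for all vectors v* , B* ∈ ℝ³ it holds that U · n* + |B*|²/2 > 0, where n* = (|v*|²/2, -v*, -B*, 1) ∈ ℝ⁸. That is, the admissible set G equals the set G* = { U : ρ > 0 and ∀ v*, B* ∈ ℝ³, U · n* + |B*|²/2 > 0 }. -/
import Mathlib


/-- For ρ > 0, positivity of the internal energy 𝓔(U) is equivalent to
U · n* + |B*|²/2 > 0 for all v*, B* ∈ ℝ³, where n* = (|v*|²/2, -v*, -B*, 1). -/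
theorem admissible_iff_linear (ρ E : ℝ) (m B : Fin 3 → ℝ) (hρ : 0 < ρ) :
    0 < E - ((∑ i, (m i) ^ 2) / ρ + ∑ i, (B i) ^ 2) / 2 ↔
    ∀ vs Bs : Fin 3 → ℝ,
      0 < ρ * (∑ i, (vs i) ^ 2) / 2 - (∑ i, m i * vs i) - (∑ i, B i * Bs i) + E
          + (∑ i, (Bs i) ^ 2) / 2 := by
  constructor
  · intro h vs Bs
    simp only [Fin.sum_univ_three] at h ⊢
    rw [div_add' _ _ _ (ne_of_gt hρ), sub_pos, div_lt_iff₀ (by norm_num : (0:ℝ) < 2),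
      div_lt_iff₀ hρ] at h
    have h1 : 0 ≤ (ρ * vs 0 - m 0)^2 + (ρ * vs 1 - m 1)^2 + (ρ * vs 2 - m 2)^2 :=
      by positivity
    have h2 : 0 ≤ (Bs 0 - B 0)^2 + (Bs 1 - B 1)^2 + (Bs 2 - B 2)^2 := by positivity
    nlinarith [sq_nonneg ρ, mul_pos hρ hρ]
  · intro h
    have := h (fun i => m i / ρ) B
    simp only [Fin.sum_univ_three] at this ⊢
    field_simp at this ⊢
    nlinarith [this, mul_pos hρ hρ, mul_pos (mul_pos hρ hρ) hρ]
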